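/- arXiv:1906.07612 — 9 statements merged into one kernel-verified Lean document; each statement's English description precedes it below -/
import Mathlib

section
/- Let ι be a finite index type, r ≥ 0 a real number, b a real number, and C, Ĉ, x : ι → ℝ with Ĉ i ≥ 0 and x i ≥ 0 for all i. Then the semi-infinite constraint "for every ξ : ι → ℝ with |ξ i| ≤ r for all i, ∑_i (C i + Ĉ i * ξ i) * x i ≤ b" holds if and only if ∑_i (C i + r * Ĉ i) * x i ≤ b. -/
theorem box_robust_upper_quality
    {ι : Type*} [Fintype ι] (r b : ℝ) (hr : 0 ≤ r)
    (C Chat x : ι → ℝ) (hChat : ∀ i, 0 ≤ Chat i) (hx : ∀ i, 0 ≤ x i) :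
    (∀ ξ : ι → ℝ, (∀ i, |ξ i| ≤ r) →
        ∑ i, (C i + Chat i * ξ i) * x i ≤ b) ↔
      ∑ i, (C i + r * Chat i) * x i ≤ b := by
  constructor
  · intro h
    have := h (fun _ => r) (fun i => by rw [abs_of_nonneg hr])
    simpa [mul_comm] using this
  · intro h ξ hξ
    refine le_trans (Finset.sum_le_sum fun i _ => ?_) h
    apply mul_le_mul_of_nonneg_right _ (hx i)
    have : Chat i * ξ i ≤ r * Chat i := by
      calc Chat i * ξ i ≤ Chat i * r :=
            mul_le_mul_of_nonneg_left (le_trans (le_abs_self _) (hξ i)) (hChat i)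
        _ = r * Chat i := mul_comm _ _
    linarith
end

section
/- Let ι be a finite index type, r ≥ 0 a real number, b a real number, and C, Ĉ, x : ι → ℝ with Ĉ i ≥ 0 and x i ≥ 0 for all i. Then the semi-infinite constraint "for every ξ : ι → ℝ with |ξ i| ≤ r for all i, ∑_i (C i + Ĉ i * ξ i) * x i ≥ b" holds if and only if ∑_i (C i - r * Ĉ i) * x i ≥ b. -/
theorem box_robust_lower_quality
    {ι : Type*} [Fintype ι] (r b : ℝ) (hr : 0 ≤ r)
    (C Chat x : ι → ℝ) (hChat : ∀ i, 0 ≤ Chat i) (hx : ∀ i, 0 ≤ x i) :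
    (∀ ξ : ι → ℝ, (∀ i, |ξ i| ≤ r) →
        ∑ i, (C i + Chat i * ξ i) * x i ≥ b) ↔
      ∑ i, (C i - r * Chat i) * x i ≥ b := by
  constructor
  · intro h
    have := h (fun _ => -r) (fun i => by simp [abs_of_nonneg hr])
    calc b ≤ ∑ i, (C i + Chat i * (-r)) * x i := this
      _ = ∑ i, (C i - r * Chat i) * x i := by exact Finset.sum_congr rfl fun i _ => by ring
  · intro h ξ hξ
    refine le_trans h (Finset.sum_le_sum fun i _ => ?_)
    apply mul_le_mul_of_nonneg_right _ (hx i)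
    have : -r ≤ ξ i := (abs_le.mp (hξ i)).1
    nlinarith [hChat i]
end

section
/- Let ι be a finite index type, r ≥ 0 a real number, b a real number, and C, Ĉ, x : ι → ℝ. Then the semi-infinite constraint "for every ξ : ι → ℝ with √(∑_i (ξ i)²) ≤ r, ∑_i (C i + Ĉ i * ξ i) * x i ≤ b" holds if and only if ∑_i C i * x i + r * √(∑_i (Ĉ i)² * (x i)²) ≤ b. -/
/-!
After the change of variables `a i = Ĉ i * x i`, the constraint reads
`∑ C i x i + ⟪a, ξ⟫ ≤ b` for all `ξ` in the Euclidean ball of radius `r`. By Cauchy–Schwarz the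
worst case of `⟪a, ξ⟫` over that ball is `r ‖a‖`, attained at `ξ = (r / ‖a‖) • a`.
-/

open scoped RealInnerProductSpace

section InnerProductSpace

variable {E : Type*} [NormedAddCommGroup E] [InnerProductSpace ℝ E]

theorem exists_norm_le_inner_eq_mul_norm {r : ℝ} (hr : 0 ≤ r) (a : E) :
    ∃ ξ : E, ‖ξ‖ ≤ r ∧ ⟪a, ξ⟫ = r * ‖a‖ := by
  rcases eq_or_ne a 0 with rfl | ha
  · exact ⟨0, by simpa using hr, by simp⟩
  have ha' : ‖a‖ ≠ 0 := norm_ne_zero_iff.2 ha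
  refine ⟨(r / ‖a‖) • a, ?_, ?_⟩
  · rw [norm_smul, Real.norm_of_nonneg (by positivity), div_mul_cancel₀ _ ha']
  · rw [real_inner_smul_right, real_inner_self_eq_norm_sq]
    field_simp

theorem forall_norm_le_add_inner_le_iff {r : ℝ} (hr : 0 ≤ r) (a : E) (c b : ℝ) :
    (∀ ξ : E, ‖ξ‖ ≤ r → c + ⟪a, ξ⟫ ≤ b) ↔ c + r * ‖a‖ ≤ b := by
  refine ⟨fun h => ?_, fun h ξ hξ => ?_⟩
  · obtain ⟨ξ, hξ, hξa⟩ := exists_norm_le_inner_eq_mul_norm hr a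
    exact hξa ▸ h ξ hξ
  · calc c + ⟪a, ξ⟫ ≤ c + ‖a‖ * ‖ξ‖ := by grw [real_inner_le_norm]
      _ ≤ c + r * ‖a‖ := by grw [hξ, mul_comm]
      _ ≤ b := h

end InnerProductSpace

namespace EuclideanSpace

variable {ι : Type*} [Fintype ι]

theorem norm_toLp_real (ξ : ι → ℝ) : ‖WithLp.toLp 2 ξ‖ = √(∑ i, ξ i ^ 2) := by
  simp [EuclideanSpace.norm_eq]

theorem inner_toLp_toLp_real (u v : ι → ℝ) :
    ⟪WithLp.toLp 2 u, WithLp.toLp 2 v⟫ = ∑ i, u i * v i := by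
  simp [inner_toLp_toLp, dotProduct, mul_comm]

end EuclideanSpace

theorem ellipsoid_robust_upper_quality
    {ι : Type*} [Fintype ι] (r b : ℝ) (hr : 0 ≤ r) (C Chat x : ι → ℝ) :
    (∀ ξ : ι → ℝ, Real.sqrt (∑ i, (ξ i) ^ 2) ≤ r →
        ∑ i, (C i + Chat i * ξ i) * x i ≤ b) ↔
      ∑ i, C i * x i + r * Real.sqrt (∑ i, (Chat i) ^ 2 * (x i) ^ 2) ≤ b := by
  have hsplit (ξ : ι → ℝ) :
      ∑ i, (C i + Chat i * ξ i) * x i = ∑ i, C i * x i + ∑ i, (Chat i * x i) * ξ i := by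
    rw [← Finset.sum_add_distrib]
    exact Finset.sum_congr rfl fun i _ => by ring
  simp_rw [← mul_pow, ← EuclideanSpace.norm_toLp_real, hsplit,
    ← EuclideanSpace.inner_toLp_toLp_real, ← forall_norm_le_add_inner_le_iff hr]
  exact (WithLp.equiv 2 (ι → ℝ)).symm.forall_congr_left
end

section
/- Let ι be a finite index type, r ≥ 0 a real number, b a real number, and C, Ĉ, x : ι → ℝ. Then the semi-infinite constraint "for every ξ : ι → ℝ with √(∑_i (ξ i)²) ≤ r, ∑_i (C i + Ĉ i * ξ i) * x i ≥ b" holds if and only if ∑_i C i * x i - r * √(∑_i (Ĉ i)² * (x i)²) ≥ b. -/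
theorem ellipsoid_robust_lower_quality
    {ι : Type*} [Fintype ι] (r b : ℝ) (hr : 0 ≤ r) (C Chat x : ι → ℝ) :
    (∀ ξ : ι → ℝ, Real.sqrt (∑ i, (ξ i) ^ 2) ≤ r →
        ∑ i, (C i + Chat i * ξ i) * x i ≥ b) ↔
      ∑ i, C i * x i - r * Real.sqrt (∑ i, (Chat i) ^ 2 * (x i) ^ 2) ≥ b := by
  set a : ι → ℝ := fun i => Chat i * x i with ha
  have hS : (∑ i, (Chat i)^2 * (x i)^2) = ∑ i, (a i)^2 := by
    apply Finset.sum_congr rfl; intro i _; simp [ha]; ring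
  set S := ∑ i, (a i)^2 with hSdef
  have hS0 : 0 ≤ S := Finset.sum_nonneg fun i _ => sq_nonneg _
  set s := Real.sqrt S with hs
  have hs0 : 0 ≤ s := Real.sqrt_nonneg _
  have hexpand : ∀ ξ : ι → ℝ, ∑ i, (C i + Chat i * ξ i) * x i
      = (∑ i, C i * x i) + ∑ i, a i * ξ i := by
    intro ξ
    rw [← Finset.sum_add_distrib]
    apply Finset.sum_congr rfl
    intro i _; simp [ha]; ring
  rw [hS, ← hs]
  constructor
  · intro h
    by_cases hzero : s = 0
    · have h0 := h 0 (by simp [hr])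
      rw [hexpand] at h0
      simpa [hzero] using h0
    · have hspos : 0 < s := lt_of_le_of_ne hs0 (Ne.symm hzero)
      have h1 := h (fun i => -(r/s) * a i) ?_
      · rw [hexpand] at h1
        have hsum2 : ∑ i, a i * (-(r/s) * a i) = -(r/s) * S := by
          rw [Finset.mul_sum]
          apply Finset.sum_congr rfl
          intro i _; ring
        rw [hsum2] at h1
        have hSs : S = s^2 := (Real.sq_sqrt hS0).symm
        rw [hSs] at h1
        have heq : -(r/s) * s^2 = -(r * s) := by field_simp
        rw [heq] at h1
        linarith
      · have hx : ∑ i, (-(r/s) * a i)^2 = (r/s)^2 * S := by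
          rw [Finset.mul_sum]; apply Finset.sum_congr rfl; intro i _; ring
        rw [hx, Real.sqrt_mul (sq_nonneg _), Real.sqrt_sq (by positivity), ← hs,
          div_mul_cancel₀ _ hzero]
  · intro h ξ hξ
    rw [hexpand]
    have hCS : (∑ i, a i * ξ i)^2 ≤ S * (∑ i, (ξ i)^2) :=
      Finset.sum_mul_sq_le_sq_mul_sq Finset.univ a ξ
    have habs : |∑ i, a i * ξ i| ≤ s * Real.sqrt (∑ i, (ξ i)^2) := by
      rw [← Real.sqrt_sq_eq_abs, hs, ← Real.sqrt_mul hS0]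
      exact Real.sqrt_le_sqrt hCS
    have h2 : s * Real.sqrt (∑ i, (ξ i)^2) ≤ s * r :=
      mul_le_mul_of_nonneg_left hξ hs0
    have h3 := neg_abs_le (∑ i, a i * ξ i)
    nlinarith [hs0]
end

section
/- Let ι be a nonempty finite index type, r ≥ 0 a real number, b a real number, and C, Ĉ, x : ι → ℝ with Ĉ i ≥ 0 and x i ≥ 0 for all i. Then the semi-infinite constraint "for every ξ : ι → ℝ with ∑_i |ξ i| ≤ r, ∑_i (C i + Ĉ i * ξ i) * x i ≤ b" holds if and only if ∑_i C i * x i + r * (max over i of Ĉ i * x i) ≤ b. -/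
theorem polyhedron_robust_upper_quality
    {ι : Type*} [Fintype ι] [Nonempty ι] (r b : ℝ) (hr : 0 ≤ r)
    (C Chat x : ι → ℝ) (hChat : ∀ i, 0 ≤ Chat i) (hx : ∀ i, 0 ≤ x i) :
    (∀ ξ : ι → ℝ, (∑ i, |ξ i|) ≤ r →
        ∑ i, (C i + Chat i * ξ i) * x i ≤ b) ↔
      ∑ i, C i * x i +
        r * (Finset.univ.sup' Finset.univ_nonempty fun i => Chat i * x i) ≤ b := by
  classical
  set M := Finset.univ.sup' Finset.univ_nonempty fun i => Chat i * x i with hM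
  obtain ⟨i0, -, hi0⟩ := Finset.exists_mem_eq_sup' Finset.univ_nonempty
    (fun i => Chat i * x i)
  have hMnn : 0 ≤ M := by
    rw [hM, hi0]; exact mul_nonneg (hChat i0) (hx i0)
  constructor
  · intro h
    have := h (fun i => if i = i0 then r else 0) (by
      rw [Finset.sum_eq_single i0]
      · simp [abs_of_nonneg hr]
      · intro i _ hne; simp [hne]
      · simp)
    have heq : ∑ i, (C i + Chat i * (if i = i0 then r else 0)) * x i
        = ∑ i, C i * x i + r * (Chat i0 * x i0) := by
      simp only [add_mul]
      rw [Finset.sum_add_distrib]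
      congr 1
      rw [Finset.sum_eq_single i0]
      · simp only [if_pos rfl, if_true]; ring
      · intro i _ hne; simp [hne]
      · simp
    rw [heq, ← hi0] at this
    exact this
  · intro h ξ hξ
    have key : ∑ i, (C i + Chat i * ξ i) * x i ≤ ∑ i, C i * x i + r * M := by
      simp only [add_mul]
      rw [Finset.sum_add_distrib]
      refine add_le_add le_rfl ?_
      calc ∑ i, Chat i * ξ i * x i ≤ ∑ i, |ξ i| * M := by
            apply Finset.sum_le_sum
            intro i _
            have h1 : Chat i * ξ i * x i ≤ |ξ i| * (Chat i * x i) := by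
              have h2 : Chat i * ξ i * x i = ξ i * (Chat i * x i) := by ring
              rw [h2]
              exact mul_le_mul_of_nonneg_right (le_abs_self _)
                (mul_nonneg (hChat i) (hx i))
            refine h1.trans ?_
            exact mul_le_mul_of_nonneg_left
              (Finset.le_sup' (fun i => Chat i * x i) (Finset.mem_univ i))
              (abs_nonneg _)
        _ = (∑ i, |ξ i|) * M := by rw [Finset.sum_mul]
        _ ≤ r * M := mul_le_mul_of_nonneg_right hξ hMnn
    exact key.trans h
end

section
/- Let ι be a finite index type, M : Matrix ι ι ℝ a symmetric positive definite matrix, r ≥ 0 and b real numbers, and C, Ĉ, x : ι → ℝ. Then the semi-infinite constraint "for every ξ : ι → ℝ with ξᵀ · M⁻¹ · ξ ≤ r², ∑_i (C i + Ĉ i * ξ i) * x i ≤ b" holds if and only if ∑_i C i * x i + r * √(∑_i ∑_{i'} M i i' * Ĉ i * Ĉ i' * x i * x i') ≤ b. -/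
/-!
Writing `a i = Ĉ i * x i`, the constraint reads `∑ C i x i + a ⬝ ξ ≤ b` for all `ξ` in the
ellipsoid `ξᵀ M⁻¹ ξ ≤ r²`, so it amounts to bounding the support function of that ellipsoid,
which is `r √(aᵀ M a)`. Since `a ⬝ ξ = ⟪M a, ξ⟫` for the inner product given by `M⁻¹`,
Cauchy–Schwarz in that inner product gives the upper bound, and `ξ = (r / √(aᵀ M a)) M a`
attains it.
-/

open Matrix

section

variable {ι : Type*} [Fintype ι]

lemma Matrix.PosSemidef.dotProduct_mulVec_sq_le {N : Matrix ι ι ℝ} (hN : N.PosSemidef)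
    (u v : ι → ℝ) : (u ⬝ᵥ N *ᵥ v) ^ 2 ≤ (u ⬝ᵥ N *ᵥ u) * (v ⬝ᵥ N *ᵥ v) := by
  let := N.toSeminormedAddCommGroup hN
  let := N.toInnerProductSpace hN
  have inner_eq : ∀ y z : ι → ℝ, inner ℝ y z = y ⬝ᵥ N *ᵥ z := fun y z => by
    change (N *ᵥ z) ⬝ᵥ star y = _
    rw [star_trivial, dotProduct_comm]
  simpa only [inner_eq, sq] using real_inner_mul_inner_self_le u v

lemma Matrix.IsHermitian.dotProduct_mulVec_comm {N : Matrix ι ι ℝ} (hN : N.IsHermitian)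
    (u v : ι → ℝ) : u ⬝ᵥ N *ᵥ v = v ⬝ᵥ N *ᵥ u := by
  rw [dotProduct_mulVec, ← mulVec_transpose, ← conjTranspose_eq_transpose_of_trivial, hN.eq,
    dotProduct_comm]

lemma dotProduct_div_sqrt_smul_mulVec (M : Matrix ι ι ℝ) (a : ι → ℝ) (r : ℝ) :
    a ⬝ᵥ (r / √(a ⬝ᵥ M *ᵥ a)) • M *ᵥ a = r * √(a ⬝ᵥ M *ᵥ a) := by
  rw [dotProduct_smul, smul_eq_mul, div_mul_eq_mul_div, mul_div_assoc, Real.div_sqrt]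

variable [DecidableEq ι]

def ellipsoid (M : Matrix ι ι ℝ) (r : ℝ) : Set (ι → ℝ) := {ξ | ξ ⬝ᵥ M⁻¹ *ᵥ ξ ≤ r ^ 2}

namespace Matrix.PosDef

variable {M : Matrix ι ι ℝ}

lemma inv_mulVec_mulVec (hM : M.PosDef) (v : ι → ℝ) : M⁻¹ *ᵥ M *ᵥ v = v := by
  rw [mulVec_mulVec, nonsing_inv_mul M (isUnit_iff_ne_zero.mpr hM.det_pos.ne'), one_mulVec]

lemma mulVec_inv_mulVec (hM : M.PosDef) (v : ι → ℝ) : M *ᵥ M⁻¹ *ᵥ v = v := by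
  rw [mulVec_mulVec, mul_nonsing_inv M (isUnit_iff_ne_zero.mpr hM.det_pos.ne'), one_mulVec]

lemma dotProduct_le_of_mem_ellipsoid (hM : M.PosDef) (a : ι → ℝ) {r : ℝ} (hr : 0 ≤ r)
    {ξ : ι → ℝ} (hξ : ξ ∈ ellipsoid M r) : a ⬝ᵥ ξ ≤ r * √(a ⬝ᵥ M *ᵥ a) := by
  have hs : 0 ≤ a ⬝ᵥ M *ᵥ a := by simpa using hM.posSemidef.dotProduct_mulVec_nonneg a
  have hdual : (M *ᵥ a) ⬝ᵥ M⁻¹ *ᵥ ξ = a ⬝ᵥ ξ := by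
    rw [dotProduct_comm, hM.isHermitian.dotProduct_mulVec_comm, hM.mulVec_inv_mulVec]
  have hcs : (a ⬝ᵥ ξ) ^ 2 ≤ (a ⬝ᵥ M *ᵥ a) * r ^ 2 :=
    calc (a ⬝ᵥ ξ) ^ 2 ≤ ((M *ᵥ a) ⬝ᵥ M⁻¹ *ᵥ M *ᵥ a) * (ξ ⬝ᵥ M⁻¹ *ᵥ ξ) :=
          hdual ▸ hM.inv.posSemidef.dotProduct_mulVec_sq_le _ _
      _ ≤ (a ⬝ᵥ M *ᵥ a) * r ^ 2 := by
          rw [hM.inv_mulVec_mulVec, dotProduct_comm]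
          exact mul_le_mul_of_nonneg_left hξ hs
  calc a ⬝ᵥ ξ ≤ |a ⬝ᵥ ξ| := le_abs_self _
    _ ≤ √((a ⬝ᵥ M *ᵥ a) * r ^ 2) := Real.abs_le_sqrt hcs
    _ = r * √(a ⬝ᵥ M *ᵥ a) := by rw [Real.sqrt_mul hs, Real.sqrt_sq hr, mul_comm]

-- At `a ⬝ M a = 0` the division by zero makes this vector `0`, still a maximizer: no case split.
lemma div_sqrt_smul_mulVec_mem_ellipsoid (hM : M.PosDef) (a : ι → ℝ) (r : ℝ) :
    (r / √(a ⬝ᵥ M *ᵥ a)) • M *ᵥ a ∈ ellipsoid M r := by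
  set s := a ⬝ᵥ M *ᵥ a
  rw [ellipsoid, Set.mem_ofPred_eq, mulVec_smul, hM.inv_mulVec_mulVec, dotProduct_smul,
    smul_dotProduct, dotProduct_comm, smul_eq_mul, smul_eq_mul]
  calc r / √s * (r / √s * s) = r ^ 2 * (s / √s / √s) := by ring
    _ = r ^ 2 * (√s / √s) := by rw [Real.div_sqrt]
    _ ≤ r ^ 2 := mul_le_of_le_one_right (sq_nonneg r) (div_self_le_one _)

lemma isGreatest_dotProduct_ellipsoid (hM : M.PosDef) (a : ι → ℝ) {r : ℝ} (hr : 0 ≤ r) :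
    IsGreatest ((a ⬝ᵥ ·) '' ellipsoid M r) (r * √(a ⬝ᵥ M *ᵥ a)) :=
  ⟨⟨_, hM.div_sqrt_smul_mulVec_mem_ellipsoid a r, dotProduct_div_sqrt_smul_mulVec M a r⟩,
    Set.forall_mem_image.2 fun _ hξ => hM.dotProduct_le_of_mem_ellipsoid a hr hξ⟩

end Matrix.PosDef

end

theorem correlated_ellipsoid_robust_upper_quality_general
    {ι : Type*} [Fintype ι] [DecidableEq ι] (M : Matrix ι ι ℝ)
    (hM : M.PosDef)
    (r b : ℝ) (hr : 0 ≤ r) (C Chat x : ι → ℝ) :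
    (∀ ξ : ι → ℝ, ξ ⬝ᵥ (M⁻¹ *ᵥ ξ) ≤ r ^ 2 →
        ∑ i, (C i + Chat i * ξ i) * x i ≤ b) ↔
      ∑ i, C i * x i +
        r * Real.sqrt (∑ i, ∑ i', M i i' * Chat i * Chat i' * x i * x i') ≤ b := by
  have hlin : ∀ ξ : ι → ℝ,
      ∑ i, (C i + Chat i * ξ i) * x i = ∑ i, C i * x i + (Chat * x) ⬝ᵥ ξ := fun ξ => by
    simp only [dotProduct, Pi.mul_apply, ← Finset.sum_add_distrib]
    exact Finset.sum_congr rfl fun i _ => by ring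
  have hquad : ∑ i, ∑ i', M i i' * Chat i * Chat i' * x i * x i' =
      (Chat * x) ⬝ᵥ M *ᵥ (Chat * x) := by
    simp only [dotProduct, mulVec, Pi.mul_apply, Finset.mul_sum]
    exact Finset.sum_congr rfl fun i _ => Finset.sum_congr rfl fun i' _ => by ring
  simp_rw [hlin, hquad, ← le_sub_iff_add_le']
  rw [isLUB_le_iff (hM.isGreatest_dotProduct_ellipsoid (Chat * x) hr).isLUB, mem_upperBounds,
    Set.forall_mem_image]
  rfl

theorem correlated_ellipsoid_robust_upper_quality
    {ι : Type*} [Fintype ι] [DecidableEq ι] (M : Matrix ι ι ℝ)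
    (hM : M.PosDef) (hMsymm : M.IsSymm)
    (r b : ℝ) (hr : 0 ≤ r) (C Chat x : ι → ℝ) :
    (∀ ξ : ι → ℝ, ξ ⬝ᵥ (M⁻¹ *ᵥ ξ) ≤ r ^ 2 →
        ∑ i, (C i + Chat i * ξ i) * x i ≤ b) ↔
      ∑ i, C i * x i +
        r * Real.sqrt (∑ i, ∑ i', M i i' * Chat i * Chat i' * x i * x i') ≤ b :=
  correlated_ellipsoid_robust_upper_quality_general M hM r b hr C Chat x
end

section
/- Let s ≥ 1, P ≥ 0, v ≥ 0 and t be real numbers. Then (i) t ≤ (P / s) * v holds if and only if t ≤ P̃ * v for every P̃ with P / s ≤ P̃ ≤ P * s; and (ii) t ≥ (P * s) * v holds if and only if t ≥ P̃ * v for every P̃ with P / s ≤ P̃ ≤ P * s. -/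
theorem safety_factor_box_equivalence
    (s P v t : ℝ) (hs : 1 ≤ s) (hP : 0 ≤ P) (hv : 0 ≤ v) :
    (t ≤ (P / s) * v ↔ ∀ Pt : ℝ, P / s ≤ Pt → Pt ≤ P * s → t ≤ Pt * v) ∧
    (t ≥ (P * s) * v ↔ ∀ Pt : ℝ, P / s ≤ Pt → Pt ≤ P * s → t ≥ Pt * v) := by
  have hs0 : (0:ℝ) < s := lt_of_lt_of_le one_pos hs
  have hle : P / s ≤ P * s := by
    rw [div_le_iff₀ hs0]
    nlinarith [mul_nonneg hP (mul_nonneg (sub_nonneg.mpr hs) hs0.le), mul_nonneg hP (sub_nonneg.mpr hs)]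
  constructor
  · constructor
    · intro h Pt h1 h2
      exact h.trans (mul_le_mul_of_nonneg_right h1 hv)
    · intro h
      exact h _ le_rfl hle
  · constructor
    · intro h Pt h1 h2
      exact le_trans (mul_le_mul_of_nonneg_right h2 hv) h
    · intro h
      exact h _ hle le_rfl
end

section
/- Let ι be a nonempty finite index type, r ≥ 0 and b real numbers, and C, Ĉ, x : ι → ℝ with Ĉ i ≥ 0 and x i ≥ 0 for all i. If the box reformulated constraint ∑_i C i * x i + r * ∑_i Ĉ i * x i ≤ b holds, then the ellipsoidal reformulated constraint ∑_i C i * x i + r * √(∑_i (Ĉ i)² * (x i)²) ≤ b holds, and then the polyhedral reformulated constraint ∑_i C i * x i + r * (max over i of Ĉ i * x i) ≤ b holds. -/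
/-!
The three padding terms are the ℓ¹, ℓ² and ℓ∞ norms of the nonnegative vector `(Ĉ i * x i)ᵢ`,
and `‖v‖∞ ≤ ‖v‖₂ ≤ ‖v‖₁`. Since `r ≥ 0`, replacing the padding by a smaller one keeps the
constraint satisfied.
-/

open Finset

namespace Finset

variable {ι : Type*} (s : Finset ι) (f : ι → ℝ)

theorem sqrt_sum_sq_le_sum_of_nonneg (hf : ∀ i ∈ s, 0 ≤ f i) :
    √(∑ i ∈ s, f i ^ 2) ≤ ∑ i ∈ s, f i :=
  Real.sqrt_le_iff.mpr ⟨sum_nonneg hf, sum_sq_le_sq_sum_of_nonneg hf⟩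

theorem sup'_le_sqrt_sum_sq (hs : s.Nonempty) : s.sup' hs f ≤ √(∑ i ∈ s, f i ^ 2) :=
  sup'_le hs f fun j hj =>
    (le_abs_self (f j)).trans <| Real.abs_le_sqrt <|
      single_le_sum (f := fun i => f i ^ 2) (fun i _ => sq_nonneg (f i)) hj

end Finset

theorem add_mul_le_of_le_of_add_mul_le {a r u v b : ℝ} (hr : 0 ≤ r) (hvu : v ≤ u)
    (h : a + r * u ≤ b) : a + r * v ≤ b :=
  (add_le_add_right (mul_le_mul_of_nonneg_left hvu hr) a).trans h

theorem reformulated_constraints_nesting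
    {ι : Type*} [Fintype ι] [Nonempty ι] (r b : ℝ) (hr : 0 ≤ r)
    (C Chat x : ι → ℝ) (hChat : ∀ i, 0 ≤ Chat i) (hx : ∀ i, 0 ≤ x i) :
    ((∑ i, C i * x i) + r * ∑ i, Chat i * x i ≤ b →
      (∑ i, C i * x i) + r * Real.sqrt (∑ i, (Chat i) ^ 2 * (x i) ^ 2) ≤ b) ∧
    ((∑ i, C i * x i) + r * Real.sqrt (∑ i, (Chat i) ^ 2 * (x i) ^ 2) ≤ b →
      (∑ i, C i * x i) +
        r * (Finset.univ.sup' Finset.univ_nonempty fun i => Chat i * x i) ≤ b) := by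
  simp only [← mul_pow]
  exact ⟨add_mul_le_of_le_of_add_mul_le hr <|
      sqrt_sum_sq_le_sum_of_nonneg _ _ fun i _ => mul_nonneg (hChat i) (hx i),
    add_mul_le_of_le_of_add_mul_le hr <| sup'_le_sqrt_sum_sq _ _ _⟩
end

section
/- Let I and L be finite index types, r ≥ 0 and B real numbers, C, Ĉ : I → ℝ with Ĉ i ≥ 0 for all i, and let q : I → L → ℝ, y : L → ℝ, z : I → ℝ be nonnegative (q i l ≥ 0, y l ≥ 0, z i ≥ 0 for all i, l). Then the semi-infinite constraint "for every ξ : I → ℝ with |ξ i| ≤ r for all i, ∑_{i,l} (C i + Ĉ i * ξ i) * q i l * y l + ∑_i (C i + Ĉ i * ξ i) * z i ≤ B" holds if and only if ∑_{i,l} (C i + r * Ĉ i) * q i l * y l + ∑_i (C i + r * Ĉ i) * z i ≤ B. -/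
theorem box_robust_bilinear_quality
    {I L : Type*} [Fintype I] [Fintype L] (r B : ℝ) (hr : 0 ≤ r)
    (C Chat : I → ℝ) (hChat : ∀ i, 0 ≤ Chat i)
    (q : I → L → ℝ) (y : L → ℝ) (z : I → ℝ)
    (hq : ∀ i l, 0 ≤ q i l) (hy : ∀ l, 0 ≤ y l) (hz : ∀ i, 0 ≤ z i) :
    (∀ ξ : I → ℝ, (∀ i, |ξ i| ≤ r) →
        (∑ i, ∑ l, (C i + Chat i * ξ i) * q i l * y l) +
          ∑ i, (C i + Chat i * ξ i) * z i ≤ B) ↔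
      (∑ i, ∑ l, (C i + r * Chat i) * q i l * y l) +
        ∑ i, (C i + r * Chat i) * z i ≤ B := by
  constructor
  · intro h
    have := h (fun _ => r) (fun i => by simp [abs_of_nonneg hr])
    simpa [mul_comm] using this
  · intro h ξ hξ
    refine le_trans ?_ h
    have key : ∀ i, C i + Chat i * ξ i ≤ C i + r * Chat i := by
      intro i
      have : Chat i * ξ i ≤ Chat i * r :=
        mul_le_mul_of_nonneg_left ((abs_le.mp (hξ i)).2) (hChat i)
      linarith [this]
    refine add_le_add (Finset.sum_le_sum fun i _ => Finset.sum_le_sum fun l _ => ?_)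
      (Finset.sum_le_sum fun i _ => ?_)
    · exact mul_le_mul_of_nonneg_right (mul_le_mul_of_nonneg_right (key i) (hq i l)) (hy l)
    · exact mul_le_mul_of_nonneg_right (key i) (hz i)
end
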